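/- The O(SO_θ(2n,ℝ))-equivariant braided derivations L_{IJ} of O(SO_θ(2n+1,ℝ)) close the braided Lie algebra so_θ(2n+1): [L_{IJ}, L_{ST}] = δ_{J'S} L_{IT} − λ_{IJ} δ_{I'S} L_{JT} − λ_{ST}(δ_{J'T} L_{IS} − λ_{IJ} δ_{I'T} L_{JS}), where the braided commutator is [L_{IJ}, L_{ST}] = L_{IJ}∘L_{ST} − λ_{IS}λ_{IT}λ_{JS}λ_{JT} L_{ST}∘L_{IJ}. -/
import Mathlib


/-!
STATEMENT 11: the `O(SO_θ(2n,ℝ))`-equivariant braided derivations `L_{IJ}` of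
`O(SO_θ(2n+1,ℝ))` close the braided Lie algebra `so_θ(2n+1)`:
`[L_{IJ}, L_{ST}] = δ_{J'S} L_{IT} − λ_{IJ} δ_{I'S} L_{JT}
  − λ_{ST}(δ_{J'T} L_{IS} − λ_{IJ} δ_{I'T} L_{JS})`,
where the braided commutator is
`[L_{IJ}, L_{ST}] = L_{IJ}∘L_{ST} − λ_{IS}λ_{IT}λ_{JS}λ_{JT} L_{ST}∘L_{IJ}`.

`O(SO_θ(2n+1,ℝ))` is modelled as a `ℂ`-algebra `A`, graded by the square of the
torus weight lattice (recording the weights of the left and right torus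
actions), generated by elements `n_{IJ}` with orthogonality relations
`Σ_K n_{K'I'} ∙ n_{KJ} = δ_{IJ}`, `Σ_K n_{IK} ∙ n_{J'K'} = δ_{IJ}` and
commutation relations `n_{IJ} ∙ n_{KL} = λ_{IK}λ_{LJ} n_{KL} ∙ n_{IJ}`
(`λ_{IJ} = exp(−2πiθ_{IJ})`, `θ_{IJ} = −θ_{JI} = −θ_{IJ'}`, `I ↦ I' = inv I`
the involution determined by the matrix `Q`, with `Q_{00} = 1` at the fixed
index `z0`).  The derivations `L_{IJ}` are given on generators by
`L_{IJ}(n_{ST}) = δ_{JS'} n_{IT} − λ_{IJ} δ_{I'S} n_{JT}`, extended as braided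
derivations (of bidegree `(wt I + wt J, 0)`), and satisfy `L_{IJ} = −λ_{IJ} L_{JI}`.
-/

noncomputable section

open scoped BigOperators

namespace Statement11

/-- `λ_{IJ} = exp(−2πi θ_{IJ})`. -/
def lam {I : Type*} (θm : I → I → ℝ) (i j : I) : ℂ :=
  Complex.exp (-(2 * (Real.pi : ℂ) * Complex.I) * (θm i j : ℂ))

/-- index set `{1, …, 2n+1}` -/
abbrev Idx (n : ℕ) := Fin (2 * n + 1)

/-- the weight lattice of the `n`-torus -/
abbrev W (n : ℕ) := Idx n → ℤ

/-- the torus weight attached to the index `I`: `e_I − e_{I'}`. -/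
def wt {n : ℕ} (inv : Idx n → Idx n) (i : Idx n) : W n :=
  fun j => (if j = i then 1 else 0) - (if j = inv i then 1 else 0)

/-- the deformation parameters extended biadditively to the weight lattice -/
def pairing {n : ℕ} (θm : Idx n → Idx n → ℝ) (p q : W n) : ℝ :=
  ∑ i, ∑ j, (p i : ℝ) * (q j : ℝ) * θm i j

/-- the braiding factor between homogeneous elements of bidegrees `p` and `q`
(the left and right torus actions braid with opposite signs); on generators,
`facSO (wt I, wt J) (wt K, wt L) = λ_{IK} λ_{LJ}`. -/
def facSO {n : ℕ} (θm : Idx n → Idx n → ℝ) (p q : W n × W n) : ℂ :=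
  Complex.exp (-((Real.pi : ℂ) * Complex.I) *
    (((pairing θm p.1 q.1 : ℝ) : ℂ) - ((pairing θm p.2 q.2 : ℝ) : ℂ)) / 2)

section Helpers

variable {n : ℕ} (inv : Idx n → Idx n) (θm : Idx n → Idx n → ℝ)
variable (hinv : ∀ I, inv (inv I) = I)
variable (hθ₁ : ∀ I J, θm I J = - θm J I)
variable (hθ₂ : ∀ I J, θm I (inv J) = - θm I J)

lemma lam_congr {i j k l : Idx n} (h : θm i j = θm k l) : lam θm i j = lam θm k l := by
  unfold lam; rw [h]

include hθ₁ in
lemma lam_self (i : Idx n) : lam θm i i = 1 := by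
  have h : θm i i = 0 := by linarith [hθ₁ i i]
  simp [lam, h]

include hθ₁ in
lemma lam_antisym (i j : Idx n) : lam θm i j * lam θm j i = 1 := by
  rw [lam, lam, ← Complex.exp_add, ← Complex.exp_zero]
  congr 1
  have : (θm j i : ℂ) = -(θm i j : ℂ) := by
    rw [hθ₁ j i]; push_cast; ring
  rw [this]; ring

include hθ₁ hθ₂ in
lemma lam_invR (i j : Idx n) : lam θm i (inv j) = lam θm j i := by
  apply lam_congr; rw [hθ₂ i j, hθ₁ i j]; ring

include hθ₁ hθ₂ in
lemma lam_invL (i j : Idx n) : lam θm (inv i) j = lam θm j i := by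
  apply lam_congr
  rw [hθ₁ (inv i) j, hθ₂ j i, hθ₁ j i]; ring

include hinv in
lemma wt_inv_inv (a : Idx n) : wt inv (inv a) = - wt inv a := by
  funext j
  simp only [wt, hinv, Pi.neg_apply]
  ring

lemma pairing_add_left (p q r : W n) :
    pairing θm (p + q) r = pairing θm p r + pairing θm q r := by
  simp only [pairing, Pi.add_apply]
  rw [← Finset.sum_add_distrib]
  refine Finset.sum_congr rfl fun i _ => ?_
  rw [← Finset.sum_add_distrib]
  refine Finset.sum_congr rfl fun j _ => ?_
  push_cast; ring

lemma pairing_add_right (p q r : W n) :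
    pairing θm p (q + r) = pairing θm p q + pairing θm p r := by
  simp only [pairing, Pi.add_apply]
  rw [← Finset.sum_add_distrib]
  refine Finset.sum_congr rfl fun i _ => ?_
  rw [← Finset.sum_add_distrib]
  refine Finset.sum_congr rfl fun j _ => ?_
  push_cast; ring

lemma pairing_zero_left (r : W n) : pairing θm 0 r = 0 := by
  simp [pairing]

lemma pairing_zero_right (r : W n) : pairing θm r 0 = 0 := by
  simp [pairing]

lemma sum_wt (v : Idx n) (f : Idx n → ℝ) :
    ∑ j, ((wt inv v j : ℝ)) * f j = f v - f (inv v) := by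
  simp only [wt]
  push_cast
  simp only [sub_mul, ite_mul, one_mul, zero_mul, Finset.sum_sub_distrib,
    Finset.sum_ite_eq', Finset.mem_univ, if_true]

include hθ₁ hθ₂ in
lemma pairing_wt (a b : Idx n) :
    pairing θm (wt inv a) (wt inv b) = 4 * θm a b := by
  have expand : pairing θm (wt inv a) (wt inv b)
      = θm a b - θm a (inv b) - θm (inv a) b + θm (inv a) (inv b) := by
    have step : pairing θm (wt inv a) (wt inv b)
        = ∑ i, ((wt inv a i : ℝ)) * (∑ j, ((wt inv b j : ℝ)) * θm i j) := by
      simp only [pairing, Finset.mul_sum, mul_assoc]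
    rw [step, sum_wt inv a, sum_wt inv b, sum_wt inv b]
    ring
  rw [expand, hθ₂ a b, hθ₂ (inv a) b]
  have h1 : θm (inv a) b = - θm a b := by
    rw [hθ₁ (inv a) b, hθ₂ b a, hθ₁ b a]; ring
  rw [h1]; ring

include hθ₁ hθ₂ in
lemma pairing_wt_add (a b c d : Idx n) :
    pairing θm (wt inv a + wt inv b) (wt inv c + wt inv d)
      = 4 * (θm a c + θm a d + θm b c + θm b d) := by
  rw [pairing_add_left, pairing_add_right, pairing_add_right,
    pairing_wt inv θm hθ₁ hθ₂, pairing_wt inv θm hθ₁ hθ₂,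
    pairing_wt inv θm hθ₁ hθ₂, pairing_wt inv θm hθ₁ hθ₂]
  ring

lemma facSO_add_right (p q r : W n × W n) :
    facSO θm p (q + r) = facSO θm p q * facSO θm p r := by
  simp only [facSO, Prod.fst_add, Prod.snd_add, pairing_add_right, ← Complex.exp_add]
  congr 1
  push_cast
  ring

lemma facSO_add_left (p q r : W n × W n) :
    facSO θm (p + q) r = facSO θm p r * facSO θm q r := by
  simp only [facSO, Prod.fst_add, Prod.snd_add, pairing_add_left, ← Complex.exp_add]
  congr 1
  push_cast
  ring

lemma facSO_zero_right (p : W n × W n) : facSO θm p 0 = 1 := by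
  simp [facSO, pairing_zero_right]

include hθ₁ hθ₂ in
lemma facSO_wt (a b c d : Idx n) :
    facSO θm (wt inv a + wt inv b, (0 : W n)) (wt inv c + wt inv d, (0 : W n))
      = lam θm a c * lam θm a d * lam θm b c * lam θm b d := by
  simp only [facSO, lam, pairing_wt_add inv θm hθ₁ hθ₂, pairing_zero_left,
    pairing_zero_right, ← Complex.exp_add]
  congr 1
  push_cast
  ring

include hθ₁ in
lemma mu_antisym (a b c d : Idx n) :
    (lam θm a c * lam θm a d * lam θm b c * lam θm b d) *
      (lam θm c a * lam θm c b * lam θm d a * lam θm d b) = 1 := by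
  have h1 := lam_antisym θm hθ₁ a c
  have h2 := lam_antisym θm hθ₁ a d
  have h3 := lam_antisym θm hθ₁ b c
  have h4 := lam_antisym θm hθ₁ b d
  linear_combination (lam θm a d * lam θm b c * lam θm b d * lam θm c b * lam θm d a * lam θm d b) * h1
    + (lam θm b c * lam θm b d * lam θm c b * lam θm d b) * h2
    + (lam θm b d * lam θm d b) * h3 + h4

-- key scalar identities for the generator computation
include hθ₁ hθ₂ in
lemma K_e (I J S T : Idx n) (h : J = inv T) :
    (lam θm I S * lam θm I T * lam θm J S * lam θm J T) * lam θm I J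
      = lam θm S T * lam θm I S := by
  subst h
  rw [lam_invL inv θm hθ₁ hθ₂, lam_invL inv θm hθ₁ hθ₂, lam_invR inv θm hθ₁ hθ₂,
    lam_self θm hθ₁]
  linear_combination (lam θm I S * lam θm S T) * lam_antisym θm hθ₁ I T

include hθ₁ hθ₂ in
lemma K_f (I J S T : Idx n) (h : T = inv I) :
    (lam θm I S * lam θm I T * lam θm J S * lam θm J T)
      = lam θm S T * lam θm I J * lam θm J S := by
  subst h
  rw [lam_invR inv θm hθ₁ hθ₂, lam_invR inv θm hθ₁ hθ₂, lam_invR inv θm hθ₁ hθ₂,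
    lam_self θm hθ₁]
  ring

include hθ₁ hθ₂ in
lemma K_c (I J S T : Idx n) (h : J = inv S) :
    (lam θm I S * lam θm I T * lam θm J S * lam θm J T) * lam θm S T * lam θm I J
      = lam θm I T := by
  subst h
  rw [lam_invL inv θm hθ₁ hθ₂, lam_invL inv θm hθ₁ hθ₂, lam_invR inv θm hθ₁ hθ₂,
    lam_self θm hθ₁]
  linear_combination (lam θm I T * lam θm T S * lam θm S T) * lam_antisym θm hθ₁ I S
    + lam θm I T * lam_antisym θm hθ₁ T S

include hθ₁ hθ₂ in
lemma K_d (I J S T : Idx n) (h : S = inv I) :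
    (lam θm I S * lam θm I T * lam θm J S * lam θm J T) * lam θm S T
      = lam θm I J * lam θm J T := by
  subst h
  rw [lam_invR inv θm hθ₁ hθ₂, lam_invR inv θm hθ₁ hθ₂, lam_invL inv θm hθ₁ hθ₂,
    lam_self θm hθ₁]
  linear_combination (lam θm I J * lam θm J T) * lam_antisym θm hθ₁ I T

end Helpers

theorem soTheta_2np1_relations
    {n : ℕ}
    (A : Type*) [Ring A] [Algebra ℂ A]
    (inv : Idx n → Idx n) (z0 : Idx n)
    (hinv : ∀ I, inv (inv I) = I) (hz0 : inv z0 = z0)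
    (θm : Idx n → Idx n → ℝ)
    (hθ₁ : ∀ I J, θm I J = - θm J I)
    (hθ₂ : ∀ I J, θm I (inv J) = - θm I J)
    (𝒜 : W n × W n → Submodule ℂ A) [GradedAlgebra 𝒜]
    -- the generators `n_{IJ}` of `O(SO_θ(2n+1,ℝ))`
    (nm : Idx n → Idx n → A)
    (hn : ∀ I J, nm I J ∈ 𝒜 (wt inv I, wt inv J))
    (hgen : Algebra.adjoin ℂ {x | ∃ I J, x = nm I J} = ⊤)
    (horth₁ : ∀ I J, ∑ K, nm (inv K) (inv I) * nm K J = if I = J then 1 else 0)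
    (horth₂ : ∀ I J, ∑ K, nm I K * nm (inv J) (inv K) = if I = J then 1 else 0)
    (hcomm : ∀ I J K L, nm I J * nm K L
      = (lam θm I K * lam θm L J) • (nm K L * nm I J))
    -- the equivariant braided derivations `L_{IJ}`
    (L : Idx n → Idx n → Module.End ℂ A)
    (hanti : ∀ I J, L I J = -(lam θm I J) • L J I)
    (hLval : ∀ I J S T, L I J (nm S T)
      = (if J = inv S then (1:ℂ) else 0) • nm I T
        - lam θm I J • ((if S = inv I then (1:ℂ) else 0) • nm J T))
    (hLeib : ∀ I J (m : W n × W n) (x y : A), x ∈ 𝒜 m →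
      L I J (x * y)
        = L I J x * y + facSO θm (wt inv I + wt inv J, 0) m • (x * L I J y)) :
    -- `[L_{IJ}, L_{ST}] = δ_{J'S} L_{IT} − λ_{IJ} δ_{I'S} L_{JT}
    --    − λ_{ST}(δ_{J'T} L_{IS} − λ_{IJ} δ_{I'T} L_{JS})`
    ∀ I J S T,
      L I J ∘ₗ L S T
          - (lam θm I S * lam θm I T * lam θm J S * lam θm J T) • (L S T ∘ₗ L I J)
      = (if inv J = S then (1:ℂ) else 0) • L I T
        - lam θm I J • ((if inv I = S then (1:ℂ) else 0) • L J T)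
        - lam θm S T • ((if inv J = T then (1:ℂ) else 0) • L I S
            - lam θm I J • ((if inv I = T then (1:ℂ) else 0) • L J S)) := by
  classical
  -- L kills 1
  have hone : ∀ I' J', L I' J' (1 : A) = 0 := by
    intro I' J'
    have h1 : (1 : A) ∈ 𝒜 0 := SetLike.one_mem_graded 𝒜
    have h2 := hLeib I' J' 0 1 1 h1
    simp only [mul_one, one_mul, facSO_zero_right θm, one_smul] at h2
    exact left_eq_add.mp h2
  have hswap : ∀ (X Y : Idx n), (X = inv Y) = (Y = inv X) := by
    intro X Y; apply propext
    constructor <;> (rintro rfl; exact (hinv _).symm)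
  have hswap2 : ∀ (X Y : Idx n), (inv X = Y) = (Y = inv X) := fun X Y => propext eq_comm
  -- the commutation relation on generators
  have hCgen : ∀ U V I J S T,
      L I J (L S T (nm U V)) - (lam θm I S * lam θm I T * lam θm J S * lam θm J T) • L S T (L I J (nm U V))
      = (if inv J = S then (1:ℂ) else 0) • L I T (nm U V) - lam θm I J • ((if inv I = S then (1:ℂ) else 0) • L J T (nm U V)) - lam θm S T • ((if inv J = T then (1:ℂ) else 0) • L I S (nm U V) - lam θm I J • ((if inv I = T then (1:ℂ) else 0) • L J S (nm U V))) := by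
    intro U V I J S T
    simp only [hLval, map_sub, map_smul, smul_sub, smul_smul]
    simp only [hswap2, hswap I S, hswap T J, hswap U J, hswap S U, hswap S J]
    match_scalars <;> split_ifs <;>
    first
      | ring1
      | linear_combination K_e inv θm hθ₁ hθ₂ I J S T ‹J = inv T›
      | linear_combination -(K_e inv θm hθ₁ hθ₂ I J S T ‹J = inv T›)
      | linear_combination -(K_f inv θm hθ₁ hθ₂ I J S T ‹T = inv I›)
      | linear_combination K_f inv θm hθ₁ hθ₂ I J S T ‹T = inv I›
      | linear_combination K_e inv θm hθ₁ hθ₂ I J S T ‹J = inv T› - K_f inv θm hθ₁ hθ₂ I J S T ‹T = inv I›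
      | linear_combination K_f inv θm hθ₁ hθ₂ I J S T ‹T = inv I› - K_e inv θm hθ₁ hθ₂ I J S T ‹J = inv T›
      | linear_combination -(K_c inv θm hθ₁ hθ₂ I J S T ‹J = inv S›)
      | linear_combination K_c inv θm hθ₁ hθ₂ I J S T ‹J = inv S›
      | linear_combination K_d inv θm hθ₁ hθ₂ I J S T ‹S = inv I›
      | linear_combination -(K_d inv θm hθ₁ hθ₂ I J S T ‹S = inv I›)
      | linear_combination K_d inv θm hθ₁ hθ₂ I J S T ‹S = inv I› - K_c inv θm hθ₁ hθ₂ I J S T ‹J = inv S›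
      | linear_combination K_c inv θm hθ₁ hθ₂ I J S T ‹J = inv S› - K_d inv θm hθ₁ hθ₂ I J S T ‹S = inv I›
  -- the degree shift of L on generators
  have hgrade : ∀ U V I' J', L I' J' (nm U V)
      ∈ 𝒜 ((wt inv U, wt inv V) + (wt inv I' + wt inv J', (0 : W n))) := by
    intro U V I' J'
    rw [hLval]
    refine Submodule.sub_mem _ ?_ (Submodule.smul_mem _ _ ?_)
    · by_cases h : J' = inv U
      · rw [if_pos h, one_smul]
        have hdeg : (wt inv U, wt inv V) + (wt inv I' + wt inv J', (0 : W n))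
            = (wt inv I', wt inv V) := by
          rw [h, wt_inv_inv inv hinv U, Prod.mk_add_mk]
          congr 1 <;> abel
        rw [hdeg]; exact hn I' V
      · rw [if_neg h, zero_smul]; exact Submodule.zero_mem _
    · by_cases h : U = inv I'
      · rw [if_pos h, one_smul]
        have hdeg : (wt inv U, wt inv V) + (wt inv I' + wt inv J', (0 : W n))
            = (wt inv J', wt inv V) := by
          rw [h, wt_inv_inv inv hinv I', Prod.mk_add_mk]
          congr 1 <;> abel
        rw [hdeg]; exact hn J' V
      · rw [if_neg h, zero_smul]; exact Submodule.zero_mem _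
  -- main induction over the monoid generated by the n_IJ
  set Sset : Set A := {x | ∃ I J, x = nm I J} with hSset
  have hQ : ∀ x ∈ Submonoid.closure Sset,
      (∃ m, x ∈ 𝒜 m ∧ ∀ I' J', L I' J' x ∈ 𝒜 (m + (wt inv I' + wt inv J', (0 : W n)))) ∧
      (∀ I J S T, L I J (L S T (x)) - (lam θm I S * lam θm I T * lam θm J S * lam θm J T) • L S T (L I J (x)) = (if inv J = S then (1:ℂ) else 0) • L I T (x) - lam θm I J • ((if inv I = S then (1:ℂ) else 0) • L J T (x)) - lam θm S T • ((if inv J = T then (1:ℂ) else 0) • L I S (x) - lam θm I J • ((if inv I = T then (1:ℂ) else 0) • L J S (x)))) := by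
    intro x hx
    induction hx using Submonoid.closure_induction with
    | mem z hz =>
      obtain ⟨U, V, rfl⟩ := hz
      exact ⟨⟨(wt inv U, wt inv V), hn U V, fun I' J' => hgrade U V I' J'⟩,
        fun I J S T => hCgen U V I J S T⟩
    | one =>
      refine ⟨⟨0, SetLike.one_mem_graded 𝒜, fun I' J' => by
        rw [hone]; exact Submodule.zero_mem _⟩, ?_⟩
      intro I J S T
      simp [hone]
    | mul x y hx' hy' ihx ihy =>
      obtain ⟨⟨mx, hxm, hLx⟩, hCx⟩ := ihx
      obtain ⟨⟨my, hym, hLy⟩, hCy⟩ := ihy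
      constructor
      · refine ⟨mx + my, SetLike.mul_mem_graded hxm hym, ?_⟩
        intro I' J'
        rw [hLeib I' J' mx x y hxm]
        apply Submodule.add_mem
        · have h1 := SetLike.mul_mem_graded (hLx I' J') hym
          have hd : (mx + (wt inv I' + wt inv J', (0 : W n))) + my
              = (mx + my) + (wt inv I' + wt inv J', (0 : W n)) := by abel
          rwa [hd] at h1
        · apply Submodule.smul_mem
          have h1 := SetLike.mul_mem_graded hxm (hLy I' J')
          have hd : mx + (my + (wt inv I' + wt inv J', (0 : W n)))
              = (mx + my) + (wt inv I' + wt inv J', (0 : W n)) := by abel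
          rwa [hd] at h1
      · intro I J S T
        have hμν := mu_antisym θm hθ₁ I J S T
        have e1 := hLeib S T mx x y hxm
        have e2 := hLeib I J mx x y hxm
        have e3 := hLeib I J (mx + (wt inv S + wt inv T, (0 : W n))) (L S T x) y (hLx S T)
        have e4 := hLeib I J mx x (L S T y) hxm
        have e5 := hLeib S T (mx + (wt inv I + wt inv J, (0 : W n))) (L I J x) y (hLx I J)
        have e6 := hLeib S T mx x (L I J y) hxm
        rw [facSO_add_right θm, facSO_wt inv θm hθ₁ hθ₂ I J S T] at e3
        rw [facSO_add_right θm, facSO_wt inv θm hθ₁ hθ₂ S T I J] at e5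
        have hPhi : L I J (L S T (x * y)) - (lam θm I S * lam θm I T * lam θm J S * lam θm J T) • L S T (L I J (x * y))
            = (L I J (L S T (x)) - (lam θm I S * lam θm I T * lam θm J S * lam θm J T) • L S T (L I J (x))) * y + (facSO θm (wt inv I + wt inv J, (0 : W n)) mx * facSO θm (wt inv S + wt inv T, (0 : W n)) mx) • (x * (L I J (L S T (y)) - (lam θm I S * lam θm I T * lam θm J S * lam θm J T) • L S T (L I J (y)))) := by
          simp only [e1, e2, map_add, map_smul, e3, e4, e5, e6]
          simp only [mul_sub, sub_mul, smul_sub, smul_add, smul_mul_assoc,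
            mul_smul_comm, smul_smul]
          match_scalars <;>
          first
            | ring1
            | linear_combination (-(facSO θm (wt inv S + wt inv T, (0 : W n)) mx)) * hμν
            | linear_combination (facSO θm (wt inv S + wt inv T, (0 : W n)) mx) * hμν
            | linear_combination (-(facSO θm (wt inv I + wt inv J, (0 : W n)) mx)) * hμν
            | linear_combination (facSO θm (wt inv I + wt inv J, (0 : W n)) mx) * hμν
            | linear_combination (-(facSO θm (wt inv I + wt inv J, (0 : W n)) mx * facSO θm (wt inv S + wt inv T, (0 : W n)) mx)) * hμν
            | linear_combination (facSO θm (wt inv I + wt inv J, (0 : W n)) mx * facSO θm (wt inv S + wt inv T, (0 : W n)) mx) * hμν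
            | linear_combination (lam θm I S * lam θm I T * lam θm J S * lam θm J T) * (facSO θm (wt inv S + wt inv T, (0 : W n)) mx) * hμν
            | linear_combination (-((lam θm I S * lam θm I T * lam θm J S * lam θm J T) * (facSO θm (wt inv S + wt inv T, (0 : W n)) mx))) * hμν
        have t : ∀ (a b : Idx n) (c : ℂ),
            (c ≠ 0 → (wt inv a + wt inv b, (0 : W n)) = (wt inv I + wt inv J, (0 : W n)) + (wt inv S + wt inv T, (0 : W n))) →
            c • L a b (x * y)
              = (c • L a b x) * y + (facSO θm (wt inv I + wt inv J, (0 : W n)) mx * facSO θm (wt inv S + wt inv T, (0 : W n)) mx) • (x * (c • L a b y)) := by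
          intro a b c hc
          by_cases h : c = 0
          · simp [h]
          · rw [hLeib a b mx x y hxm, hc h, facSO_add_left]
            simp only [smul_add, smul_mul_assoc, mul_smul_comm, smul_smul]
            match_scalars <;> ring
        have t1 := t I T (if inv J = S then (1:ℂ) else 0) (fun hc => by
          have h : inv J = S := by by_contra hh; exact hc (if_neg hh)
          rw [← h, wt_inv_inv inv hinv J, Prod.mk_add_mk]
          congr 1 <;> abel)
        have t2 := t J T (if inv I = S then (1:ℂ) else 0) (fun hc => by
          have h : inv I = S := by by_contra hh; exact hc (if_neg hh)
          rw [← h, wt_inv_inv inv hinv I, Prod.mk_add_mk]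
          congr 1 <;> abel)
        have t3 := t I S (if inv J = T then (1:ℂ) else 0) (fun hc => by
          have h : inv J = T := by by_contra hh; exact hc (if_neg hh)
          rw [← h, wt_inv_inv inv hinv J, Prod.mk_add_mk]
          congr 1 <;> abel)
        have t4 := t J S (if inv I = T then (1:ℂ) else 0) (fun hc => by
          have h : inv I = T := by by_contra hh; exact hc (if_neg hh)
          rw [← h, wt_inv_inv inv hinv I, Prod.mk_add_mk]
          congr 1 <;> abel)
        have hPsi : (if inv J = S then (1:ℂ) else 0) • L I T (x * y) - lam θm I J • ((if inv I = S then (1:ℂ) else 0) • L J T (x * y)) - lam θm S T • ((if inv J = T then (1:ℂ) else 0) • L I S (x * y) - lam θm I J • ((if inv I = T then (1:ℂ) else 0) • L J S (x * y)))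
            = ((if inv J = S then (1:ℂ) else 0) • L I T (x) - lam θm I J • ((if inv I = S then (1:ℂ) else 0) • L J T (x)) - lam θm S T • ((if inv J = T then (1:ℂ) else 0) • L I S (x) - lam θm I J • ((if inv I = T then (1:ℂ) else 0) • L J S (x)))) * y + (facSO θm (wt inv I + wt inv J, (0 : W n)) mx * facSO θm (wt inv S + wt inv T, (0 : W n)) mx) • (x * ((if inv J = S then (1:ℂ) else 0) • L I T (y) - lam θm I J • ((if inv I = S then (1:ℂ) else 0) • L J T (y)) - lam θm S T • ((if inv J = T then (1:ℂ) else 0) • L I S (y) - lam θm I J • ((if inv I = T then (1:ℂ) else 0) • L J S (y))))) := by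
          rw [t1, t2, t3, t4]
          simp only [mul_sub, sub_mul, smul_sub, smul_add, smul_mul_assoc,
            mul_smul_comm, smul_smul]
          match_scalars <;> ring
        rw [hPhi, hCx I J S T, hCy I J S T, hPsi]
  -- conclude by linearity
  have hspan : Submodule.span ℂ ((Submonoid.closure Sset : Submonoid A) : Set A)
      = ⊤ := by
    rw [← Algebra.adjoin_eq_span, ← hSset] at *
    rw [hgen]
    rfl
  intro I J S T
  apply LinearMap.ext
  intro x
  have hx : x ∈ (⊤ : Submodule ℂ A) := Submodule.mem_top
  rw [← hspan] at hx
  induction hx using Submodule.span_induction with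
  | mem z hz =>
    simp only [LinearMap.sub_apply, LinearMap.comp_apply, LinearMap.smul_apply]
    exact (hQ z hz).2 I J S T
  | zero => simp only [map_zero]
  | add a b _ _ iha ihb => rw [map_add, map_add, iha, ihb]
  | smul c a _ iha => rw [map_smul, map_smul, iha]

end Statement11
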